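/- Let u be a C³ function on an open set Ω ⊆ ℝⁿ satisfying the quasilinear equation Σ_{ij} a_{ij}(∇u)∂ᵢ∂ⱼu = 0, where a_{ij}(p) = F'(|p|²)δ_{ij} + 2F''(|p|²)pᵢpⱼ for a C³ function F. Then w(x) = ⟨∇u(x), x⟩ − u(x) satisfies Σ_{ij} a_{ij}(∇u)∂ᵢ∂ⱼw = ⟨b, ∇w⟩, where b = −2{[F''(|∇u|²)Δu + 2F'''(|∇u|²)⟨D²u·∇u, ∇u⟩]·∇u + 2F''(|∇u|²)·D²u·∇u}. -/

import Mathlib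

open RealInnerProductSpace

/-- First partial derivative `∂ᵢ u`. -/
noncomputable def pd {n : ℕ} (i : Fin n) (u : EuclideanSpace ℝ (Fin n) → ℝ)
    (x : EuclideanSpace ℝ (Fin n)) : ℝ :=
  fderiv ℝ u x (EuclideanSpace.single i 1)

/-- Second partial derivative `∂ᵢ∂ⱼ u`. -/
noncomputable def pd2 {n : ℕ} (i j : Fin n) (u : EuclideanSpace ℝ (Fin n) → ℝ)
    (x : EuclideanSpace ℝ (Fin n)) : ℝ :=
  pd i (pd j u) x

/-- The Laplacian of `u` at `x`. -/
noncomputable def lap {n : ℕ} (u : EuclideanSpace ℝ (Fin n) → ℝ)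
    (x : EuclideanSpace ℝ (Fin n)) : ℝ :=
  ∑ i : Fin n, pd2 i i u x

/-!
Differentiating the equation `∑ aᵢⱼ(∇u) ∂ᵢ∂ⱼu = 0` along `eₘ` gives
`∑ aᵢⱼ(∇u) ∂ₘ∂ᵢ∂ⱼu = -∑ ∂ₘ[aᵢⱼ(∇u)] ∂ᵢ∂ⱼu`. Since `∂ᵢ∂ⱼw = ∂ᵢ∂ⱼu + ∑ₘ xₘ ∂ₘ∂ᵢ∂ⱼu`, this yields
`∑ aᵢⱼ(∇u) ∂ᵢ∂ⱼw = -∑ₘ xₘ ∑ ∂ₘ[aᵢⱼ(∇u)] ∂ᵢ∂ⱼu`. By the chain rule, the inner sum is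
`-⟨b, D²u eₘ⟩`, so `∑ aᵢⱼ(∇u) ∂ᵢ∂ⱼw = ⟨b, D²u x⟩`, which is `⟨b, ∇w⟩` because `∇w = D²u x`.
-/

open Filter Topology

section PartialDerivatives

variable {n : ℕ} {f g : EuclideanSpace ℝ (Fin n) → ℝ} {x : EuclideanSpace ℝ (Fin n)}

lemma pd_congr (i : Fin n) (h : f =ᶠ[𝓝 x] g) : pd i f x = pd i g x := by
  rw [pd, pd, h.fderiv_eq]

lemma pd_mul (i : Fin n) (hf : DifferentiableAt ℝ f x) (hg : DifferentiableAt ℝ g x) :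
    pd i (fun y => f y * g y) x = pd i f x * g x + f x * pd i g x := by
  simp only [pd, fderiv_fun_mul hf hg, add_apply, smul_apply, smul_eq_mul]
  ring

lemma pd_sum {ι : Type*} (s : Finset ι) (i : Fin n) {f : ι → EuclideanSpace ℝ (Fin n) → ℝ}
    (hf : ∀ k ∈ s, DifferentiableAt ℝ (f k) x) :
    pd i (fun y => ∑ k ∈ s, f k y) x = ∑ k ∈ s, pd i (f k) x := by
  simp only [pd, fderiv_fun_sum hf, FunLike.coe_sum, Finset.sum_apply]

lemma pd_coord (i m : Fin n) : pd i (fun y => y m) x = if i = m then 1 else 0 := by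
  rw [pd, show (fun y : EuclideanSpace ℝ (Fin n) => y m) = EuclideanSpace.proj m from rfl,
    ContinuousLinearMap.fderiv]
  simp [PiLp.single_apply, eq_comm]

lemma pd_eq_fderiv_fderiv (i j : Fin n) (hf : DifferentiableAt ℝ (fderiv ℝ f) x) :
    pd i (pd j f) x = fderiv ℝ (fderiv ℝ f) x (EuclideanSpace.single i 1)
      (EuclideanSpace.single j 1) := by
  change fderiv ℝ (fun y => fderiv ℝ f y (EuclideanSpace.single j 1)) x _ = _
  simp [fderiv_clm_apply hf (differentiableAt_const _)]

lemma pd_pd_comm (i j : Fin n) (hf : ContDiffAt ℝ 2 f x) : pd i (pd j f) x = pd j (pd i f) x := by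
  have hd : DifferentiableAt ℝ (fderiv ℝ f) x :=
    (hf.fderiv_right (m := 1) le_rfl).differentiableAt one_ne_zero
  rw [pd_eq_fderiv_fderiv i j hd, pd_eq_fderiv_fderiv j i hd]
  exact hf.isSymmSndFDerivAt (by simp) _ _

lemma ContDiffAt.pd {k : WithTop ℕ∞} (i : Fin n) (hf : ContDiffAt ℝ (k + 1) f x) :
    ContDiffAt ℝ k (pd i f) x :=
  (hf.fderiv_right le_rfl).clm_apply contDiffAt_const

lemma pd_pd_pd_comm {f : EuclideanSpace ℝ (Fin n) → ℝ} (hf : ContDiffAt ℝ 3 f x) (i j m : Fin n) :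
    pd i (pd j (pd m f)) x = pd m (pd i (pd j f)) x := by
  have hev : pd j (pd m f) =ᶠ[𝓝 x] pd m (pd j f) :=
    (hf.eventually (by simp)).mono fun y hy => pd_pd_comm j m (hy.of_le (by norm_num))
  rw [pd_congr i hev]
  exact pd_pd_comm i m (hf.pd (k := 2) j)

end PartialDerivatives

section Coordinates

variable {n : ℕ}

lemma apply_eq_sum_mul_apply_single (φ : EuclideanSpace ℝ (Fin n) →L[ℝ] ℝ)
    (v : EuclideanSpace ℝ (Fin n)) : φ v = ∑ m, v m * φ (EuclideanSpace.single m 1) := by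
  conv_lhs => rw [← (EuclideanSpace.basisFun (Fin n) ℝ).sum_repr v]
  simp

lemma sum_sum_mul_apply_single
    (B : EuclideanSpace ℝ (Fin n) →L[ℝ] EuclideanSpace ℝ (Fin n) →L[ℝ] ℝ)
    (v w : EuclideanSpace ℝ (Fin n)) :
    ∑ i, ∑ j, v i * w j * B (EuclideanSpace.single i 1) (EuclideanSpace.single j 1) = B v w := by
  have hv := apply_eq_sum_mul_apply_single (B.flip w) v
  simp only [ContinuousLinearMap.flip_apply] at hv
  rw [hv]
  refine Finset.sum_congr rfl fun i _ => ?_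
  rw [apply_eq_sum_mul_apply_single (B _) w, Finset.mul_sum]
  exact Finset.sum_congr rfl fun j _ => by ring

end Coordinates

section Gradient

variable {n : ℕ} {u : EuclideanSpace ℝ (Fin n) → ℝ} {x : EuclideanSpace ℝ (Fin n)}

lemma gradient_apply_eq_pd (y : EuclideanSpace ℝ (Fin n)) (i : Fin n) :
    gradient u y i = pd i u y := by
  rw [pd, ← inner_gradient_left, EuclideanSpace.inner_single_right]
  simp

lemma inner_fderiv_gradient (v w : EuclideanSpace ℝ (Fin n)) :
    ⟪fderiv ℝ (gradient u) x v, w⟫ = fderiv ℝ (fderiv ℝ u) x v w := by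
  change ⟪fderiv ℝ ((InnerProductSpace.toDual ℝ _).symm ∘ fderiv ℝ u) x v, w⟫ = _
  rw [LinearIsometryEquiv.comp_fderiv]
  exact InnerProductSpace.toDual_symm_apply

lemma ContDiffAt.differentiableAt_gradient (hu : ContDiffAt ℝ 2 u x) :
    DifferentiableAt ℝ (gradient u) x :=
  (InnerProductSpace.toDual ℝ _).symm.differentiableAt.comp x
    ((hu.fderiv_right (m := 1) le_rfl).differentiableAt one_ne_zero)

end Gradient

section Legendre

variable {n : ℕ} {u : EuclideanSpace ℝ (Fin n) → ℝ} {x : EuclideanSpace ℝ (Fin n)}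

-- For convex `u` this is the Legendre transform of `u` evaluated at `∇u y`.
noncomputable def legendre (u : EuclideanSpace ℝ (Fin n) → ℝ) (y : EuclideanSpace ℝ (Fin n)) : ℝ :=
  ⟪gradient u y, y⟫ - u y

lemma pd_legendre {y : EuclideanSpace ℝ (Fin n)} (hu : ContDiffAt ℝ 2 u y) (j : Fin n) :
    pd j (legendre u) y = fderiv ℝ (fderiv ℝ u) y (EuclideanSpace.single j 1) y := by
  have hD : DifferentiableAt ℝ (fderiv ℝ u) y :=
    (hu.fderiv_right (m := 1) le_rfl).differentiableAt one_ne_zero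
  have hw : legendre u = fun z => fderiv ℝ u z z - u z :=
    funext fun z => by rw [legendre, inner_gradient_left]
  rw [pd, hw,
    fderiv_fun_sub (hD.clm_apply differentiableAt_fun_id) (hu.differentiableAt two_ne_zero),
    fderiv_clm_apply hD differentiableAt_fun_id]
  simp

lemma gradient_legendre (hu : ContDiffAt ℝ 2 u x) :
    gradient (legendre u) x = fderiv ℝ (gradient u) x x := by
  ext k
  rw [gradient_apply_eq_pd, pd_legendre hu, ← hu.isSymmSndFDerivAt (by simp),
    ← inner_fderiv_gradient, EuclideanSpace.inner_single_right]
  simp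

lemma pd2_legendre (hu : ContDiffAt ℝ 3 u x) (i j : Fin n) :
    pd2 i j (legendre u) x = pd2 i j u x + ∑ m, x m * pd m (pd2 i j u) x := by
  have hev : pd j (legendre u) =ᶠ[𝓝 x] fun y => ∑ m, y m * pd2 j m u y :=
    (hu.eventually (by simp)).mono fun y hy => by
      have hy2 : ContDiffAt ℝ 2 u y := hy.of_le (by norm_num)
      rw [pd_legendre hy2, apply_eq_sum_mul_apply_single]
      refine Finset.sum_congr rfl fun m _ => ?_
      rw [pd2, pd_eq_fderiv_fderiv j m
        ((hy2.fderiv_right (m := 1) le_rfl).differentiableAt one_ne_zero)]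
  have hd : ∀ m, DifferentiableAt ℝ (pd2 j m u) x := fun m =>
    ((hu.pd (k := 2) m).pd (k := 1) j).differentiableAt one_ne_zero
  have hcoord : ∀ m, DifferentiableAt ℝ (fun y : EuclideanSpace ℝ (Fin n) => y m) x :=
    fun m => by fun_prop
  rw [pd2, pd_congr i hev, pd_sum (f := fun m y => y m * pd2 j m u y) _ i
    fun m _ => (hcoord m).mul (hd m)]
  simp_rw [pd_mul i (hcoord _) (hd _), pd_coord, ite_mul, one_mul,
    zero_mul, Finset.sum_add_distrib, Finset.sum_ite_eq, Finset.mem_univ, if_true]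
  congr 1
  · exact pd_pd_comm j i (hu.of_le (by norm_num))
  · exact Finset.sum_congr rfl fun m _ => congrArg _ (pd_pd_pd_comm hu i j m)

end Legendre

section LinearizedEquation

variable {n : ℕ} {u : EuclideanSpace ℝ (Fin n) → ℝ} {x : EuclideanSpace ℝ (Fin n)}
  {c : EuclideanSpace ℝ (Fin n) → Fin n → Fin n → ℝ}

lemma sum_mul_pd_pd2_of_eventually_eq_zero (hu : ContDiffAt ℝ 3 u x)
    (hc : ∀ i j, DifferentiableAt ℝ (fun y => c y i j) x)
    (heq : ∀ᶠ y in 𝓝 x, ∑ i, ∑ j, c y i j * pd2 i j u y = 0) (m : Fin n) :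
    ∑ i, ∑ j, c x i j * pd m (pd2 i j u) x
      = -∑ i, ∑ j, pd m (fun y => c y i j) x * pd2 i j u x := by
  have hd : ∀ i j, DifferentiableAt ℝ (pd2 i j u) x := fun i j =>
    ((hu.pd (k := 2) j).pd (k := 1) i).differentiableAt one_ne_zero
  have h0 : pd m (fun y => ∑ i, ∑ j, c y i j * pd2 i j u y) x = 0 := by
    rw [pd_congr m heq]
    simp [pd]
  rw [pd_sum (f := fun i y => ∑ j, c y i j * pd2 i j u y) _ m
    fun i _ => DifferentiableAt.fun_sum fun j _ => (hc i j).fun_mul (hd i j)] at h0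
  simp_rw [pd_sum (f := fun j y => c y _ j * pd2 _ j u y) _ m fun j _ => (hc _ j).fun_mul (hd _ j),
    pd_mul m (hc _ _) (hd _ _), Finset.sum_add_distrib] at h0
  linarith

lemma sum_mul_pd2_legendre (hu : ContDiffAt ℝ 3 u x)
    (hc : ∀ i j, DifferentiableAt ℝ (fun y => c y i j) x)
    (heq : ∀ᶠ y in 𝓝 x, ∑ i, ∑ j, c y i j * pd2 i j u y = 0) :
    ∑ i, ∑ j, c x i j * pd2 i j (legendre u) x
      = -∑ m, x m * ∑ i, ∑ j, pd m (fun y => c y i j) x * pd2 i j u x := by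
  simp_rw [pd2_legendre hu, mul_add, Finset.sum_add_distrib, heq.self_of_nhds, zero_add]
  have hm : ∀ m, x m * ∑ i, ∑ j, c x i j * pd m (pd2 i j u) x
      = -(x m * ∑ i, ∑ j, pd m (fun y => c y i j) x * pd2 i j u x) := fun m => by
    rw [sum_mul_pd_pd2_of_eventually_eq_zero hu hc heq, mul_neg]
  rw [← Finset.sum_neg_distrib, ← Finset.sum_congr rfl fun m _ => hm m]
  simp only [Finset.mul_sum]
  refine ((Finset.sum_congr rfl fun _ _ => Finset.sum_comm).trans Finset.sum_comm).trans ?_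
  exact Finset.sum_congr rfl fun _ _ => Finset.sum_congr rfl fun _ _ =>
    Finset.sum_congr rfl fun _ _ => mul_left_comm _ _ _

end LinearizedEquation

section Coefficients

variable {n : ℕ} {F : ℝ → ℝ}

noncomputable def quasilinearCoeff (F : ℝ → ℝ) (p : EuclideanSpace ℝ (Fin n)) (i j : Fin n) : ℝ :=
  deriv F (‖p‖ ^ 2) * (if i = j then (1 : ℝ) else 0) + 2 * deriv (deriv F) (‖p‖ ^ 2) * p i * p j

lemma differentiable_quasilinearCoeff (hF' : Differentiable ℝ (deriv F))
    (hF'' : Differentiable ℝ (deriv (deriv F))) (i j : Fin n) :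
    Differentiable ℝ (fun p => quasilinearCoeff F p i j) := by
  have hN : Differentiable ℝ (fun p : EuclideanSpace ℝ (Fin n) => ‖p‖ ^ 2) := fun p =>
    (hasStrictFDerivAt_norm_sq p).hasFDerivAt.differentiableAt
  unfold quasilinearCoeff
  fun_prop

lemma fderiv_quasilinearCoeff_apply (hF' : Differentiable ℝ (deriv F))
    (hF'' : Differentiable ℝ (deriv (deriv F))) (p q : EuclideanSpace ℝ (Fin n)) (i j : Fin n) :
    fderiv ℝ (fun p => quasilinearCoeff F p i j) p q
      = 2 * ⟪p, q⟫ * deriv (deriv F) (‖p‖ ^ 2) * (if i = j then 1 else 0)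
        + 4 * ⟪p, q⟫ * deriv (deriv (deriv F)) (‖p‖ ^ 2) * p i * p j
        + 2 * deriv (deriv F) (‖p‖ ^ 2) * (q i * p j + p i * q j) := by
  have hN := (hasStrictFDerivAt_norm_sq p).hasFDerivAt
  have h1 := (hF' _).hasDerivAt.comp_hasFDerivAt p hN
  have h2 := (hF'' _).hasDerivAt.comp_hasFDerivAt p hN
  have hd : HasFDerivAt (fun p => quasilinearCoeff F p i j) _ p :=
    (h1.mul_const (if i = j then (1 : ℝ) else 0)).add
      (((h2.const_mul 2).mul (EuclideanSpace.proj i).hasFDerivAt).mul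
        (EuclideanSpace.proj j).hasFDerivAt)
  rw [hd.fderiv]
  split_ifs <;>
    simp only [one_smul, zero_smul, zero_add, Function.comp_apply, EuclideanSpace.coe_proj,
      Pi.mul_apply, PiLp.proj_apply, smul_add, add_apply, smul_apply, coe_innerSL_apply,
      nsmul_eq_mul, Nat.cast_ofNat, smul_eq_mul, mul_one, mul_zero] <;>
    ring

lemma sum_sum_rankTwo_mul_apply_single
    (B : EuclideanSpace ℝ (Fin n) →L[ℝ] EuclideanSpace ℝ (Fin n) →L[ℝ] ℝ) (α β γ : ℝ)
    (p q : EuclideanSpace ℝ (Fin n)) :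
    ∑ i, ∑ j, (α * (if i = j then 1 else 0) + β * p i * p j + γ * (q i * p j + p i * q j))
        * B (EuclideanSpace.single i 1) (EuclideanSpace.single j 1)
      = α * ∑ i, B (EuclideanSpace.single i 1) (EuclideanSpace.single i 1)
        + β * B p p + γ * (B q p + B p q) := by
  rw [← sum_sum_mul_apply_single B p p, ← sum_sum_mul_apply_single B q p,
    ← sum_sum_mul_apply_single B p q]
  simp only [add_mul, mul_add, Finset.sum_add_distrib]
  simp only [mul_ite, ite_mul, mul_one, mul_zero, zero_mul, Finset.sum_ite_eq, Finset.mem_univ,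
    if_true, Finset.mul_sum, mul_assoc]

end Coefficients

section Drift

variable {n : ℕ} {F : ℝ → ℝ} {u : EuclideanSpace ℝ (Fin n) → ℝ} {x : EuclideanSpace ℝ (Fin n)}

-- For convex `u` this is the Legendre transform of `u` evaluated at `∇u y`.
noncomputable def legendreDrift (F : ℝ → ℝ) (u : EuclideanSpace ℝ (Fin n) → ℝ)
    (x : EuclideanSpace ℝ (Fin n)) : EuclideanSpace ℝ (Fin n) :=
  (-2 : ℝ) •
    ((deriv (deriv F) (‖gradient u x‖ ^ 2) * lap u x
        + 2 * deriv (deriv (deriv F)) (‖gradient u x‖ ^ 2)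
          * ⟪fderiv ℝ (gradient u) x (gradient u x), gradient u x⟫) • gradient u x
      + (2 * deriv (deriv F) (‖gradient u x‖ ^ 2)) • fderiv ℝ (gradient u) x (gradient u x))

lemma sum_pd_quasilinearCoeff_mul_pd2 (hu : ContDiffAt ℝ 2 u x)
    (hF' : Differentiable ℝ (deriv F)) (hF'' : Differentiable ℝ (deriv (deriv F))) (m : Fin n) :
    ∑ i, ∑ j, pd m (fun y => quasilinearCoeff F (gradient u y) i j) x * pd2 i j u x
      = -⟪legendreDrift F u x, fderiv ℝ (gradient u) x (EuclideanSpace.single m 1)⟫ := by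
  have hD : DifferentiableAt ℝ (fderiv ℝ u) x :=
    (hu.fderiv_right (m := 1) le_rfl).differentiableAt one_ne_zero
  have hchain : ∀ i j, pd m (fun y => quasilinearCoeff F (gradient u y) i j) x
      = fderiv ℝ (fun p => quasilinearCoeff F p i j) (gradient u x)
          (fderiv ℝ (gradient u) x (EuclideanSpace.single m 1)) := fun i j => by
    rw [pd, fderiv_fun_comp x ((differentiable_quasilinearCoeff hF' hF'' i j) _)
      hu.differentiableAt_gradient]
    rfl
  have hlap : lap u x = ∑ i, fderiv ℝ (fderiv ℝ u) x (EuclideanSpace.single i 1)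
      (EuclideanSpace.single i 1) :=
    Finset.sum_congr rfl fun i _ => pd_eq_fderiv_fderiv i i hD
  simp_rw [hchain, fderiv_quasilinearCoeff_apply hF' hF'', pd2, pd_eq_fderiv_fderiv _ _ hD,
    sum_sum_rankTwo_mul_apply_single]
  simp only [legendreDrift, hlap, real_inner_smul_left, inner_add_left, inner_fderiv_gradient]
  rw [hu.isSymmSndFDerivAt (by simp) (fderiv ℝ (gradient u) x _)]
  ring

end Drift

/-- Let `u ∈ C³(Ω)` solve `∑ a_{ij}(∇u) ∂ᵢ∂ⱼ u = 0` where
`a_{ij}(p) = F'(|p|²)δ_{ij} + 2F''(|p|²)pᵢpⱼ` for a `C³` function `F`.  Then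
`w x = ⟨∇u x, x⟩ - u x` satisfies `∑ a_{ij}(∇u) ∂ᵢ∂ⱼ w = ⟨b, ∇w⟩`, where
`b = -2{[F''(|∇u|²)Δu + 2F'''(|∇u|²)⟨D²u·∇u, ∇u⟩]∇u + 2F''(|∇u|²) D²u·∇u}`. -/
theorem stmt15 {n : ℕ} {Ω : Set (EuclideanSpace ℝ (Fin n))} (hΩ : IsOpen Ω)
    {F : ℝ → ℝ} (hF : ContDiff ℝ 3 F)
    {u : EuclideanSpace ℝ (Fin n) → ℝ} (hu : ContDiffOn ℝ 3 u Ω)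
    (a : EuclideanSpace ℝ (Fin n) → Fin n → Fin n → ℝ)
    (ha : ∀ p i j, a p i j
      = deriv F (‖p‖ ^ 2) * (if i = j then (1 : ℝ) else 0)
        + 2 * deriv (deriv F) (‖p‖ ^ 2) * p i * p j)
    (heq : ∀ x ∈ Ω, ∑ i : Fin n, ∑ j : Fin n, a (gradient u x) i j * pd2 i j u x = 0)
    (b : EuclideanSpace ℝ (Fin n) → EuclideanSpace ℝ (Fin n))
    (hb : ∀ x, b x = (-2 : ℝ) •
      ((deriv (deriv F) (‖gradient u x‖ ^ 2) * lap u x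
          + 2 * deriv (deriv (deriv F)) (‖gradient u x‖ ^ 2)
            * ⟪fderiv ℝ (gradient u) x (gradient u x), gradient u x⟫) • gradient u x
        + (2 * deriv (deriv F) (‖gradient u x‖ ^ 2))
            • fderiv ℝ (gradient u) x (gradient u x)))
    (w : EuclideanSpace ℝ (Fin n) → ℝ)
    (hw : ∀ x, w x = ⟪gradient u x, x⟫ - u x) :
    ∀ x ∈ Ω, ∑ i : Fin n, ∑ j : Fin n, a (gradient u x) i j * pd2 i j w x
      = ⟪b x, gradient w x⟫ := by
  intro x hx
  have hux : ContDiffAt ℝ 3 u x := hu.contDiffAt (hΩ.mem_nhds hx)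
  have hux2 : ContDiffAt ℝ 2 u x := hux.of_le (by norm_num)
  have hF' : Differentiable ℝ (deriv F) := (hF.deriv' (n := 2)).differentiable two_ne_zero
  have hF'' : Differentiable ℝ (deriv (deriv F)) :=
    ((hF.deriv' (n := 2)).deriv' (n := 1)).differentiable one_ne_zero
  obtain rfl : a = quasilinearCoeff F := funext fun p => funext fun i => funext (ha p i)
  obtain rfl : b = legendreDrift F u := funext hb
  obtain rfl : w = legendre u := funext hw
  have hc : ∀ i j, DifferentiableAt ℝ (fun y => quasilinearCoeff F (gradient u y) i j) x :=
    fun i j => (differentiable_quasilinearCoeff hF' hF'' i j _).comp x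
      hux2.differentiableAt_gradient
  rw [sum_mul_pd2_legendre hux hc (eventually_of_mem (hΩ.mem_nhds hx) heq),
    gradient_legendre hux2]
  simp_rw [sum_pd_quasilinearCoeff_mul_pd2 hux2 hF' hF'', mul_neg, Finset.sum_neg_distrib, neg_neg]
  have hexp := apply_eq_sum_mul_apply_single
    ((innerSL ℝ (legendreDrift F u x)).comp (fderiv ℝ (gradient u) x)) x
  simp only [ContinuousLinearMap.comp_apply, innerSL_apply_apply] at hexp
  exact hexp.symm
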